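/- If v belongs to the monotone non-negative cone K_{m+} = {x : x_1 ≥ ... ≥ x_n ≥ 0}, then prox_{Ω_w}(v) also belongs to K_{m+}. -/

import Mathlib

open Finset

/-- The vector of absolute values of x, sorted in non-increasing order. -/
noncomputable def absSorted {n : ℕ} (x : Fin n → ℝ) : Fin n → ℝ :=
  fun i => |x (Tuple.sort (fun j => -|x j|) i)|

/-- The ordered weighted l1 norm Omega_w(x). -/
noncomputable def owl {n : ℕ} (w x : Fin n → ℝ) : ℝ := ∑ i, w i * absSorted x i

/-- The objective defining the proximity operator of Omega_w at v. -/
noncomputable def proxObj {n : ℕ} (w v x : Fin n → ℝ) : ℝ :=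
  (1 / 2) * ∑ i, (x i - v i) ^ 2 + owl w x

/-!
Let `q` be the non-increasing rearrangement of `|p|`. It has the same norm and the same `Ω_w`
as `p`, while `⟨p, v⟩ ≤ ⟨|p|, v⟩ ≤ ⟨q, v⟩` by the Hardy–Littlewood–Pólya rearrangement
inequality, since `v` is non-negative and non-increasing. Hence `q` is at least as good as `p`
for the prox objective. That objective is `1`-strongly convex, so its minimiser is unique and
`p = q` lies in the monotone non-negative cone.
-/

variable {n : ℕ}

section absSorted

lemma absSorted_nonneg (x : Fin n → ℝ) (i : Fin n) : 0 ≤ absSorted x i :=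
  abs_nonneg _

lemma absSorted_antitone (x : Fin n → ℝ) : Antitone (absSorted x) := by
  intro i j hij
  simpa [absSorted] using Tuple.monotone_sort (fun j => -|x j|) hij

lemma absSorted_of_antitone {x : Fin n → ℝ} (hx : Antitone x) (hx0 : ∀ i, 0 ≤ x i) :
    absSorted x = x := by
  have habs : ∀ j, |x j| = x j := fun j => abs_of_nonneg (hx0 j)
  have hsorted : Monotone (fun j => -|x j|) := fun i j hij => by
    simpa only [habs, neg_le_neg_iff] using hx hij
  have hsort := (Tuple.comp_sort_eq_comp_iff_monotone (f := fun j => -|x j|) (σ := Equiv.refl _)).mpr hsorted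
  funext i
  simpa [absSorted, habs] using (congrFun hsort i).symm

lemma absSorted_absSorted (x : Fin n → ℝ) : absSorted (absSorted x) = absSorted x :=
  absSorted_of_antitone (absSorted_antitone x) (absSorted_nonneg x)

lemma sum_absSorted_sq (x : Fin n → ℝ) : ∑ i, absSorted x i ^ 2 = ∑ i, x i ^ 2 := by
  simpa [absSorted, sq_abs] using Equiv.sum_comp (Tuple.sort fun j => -|x j|) (fun j => x j ^ 2)

lemma sum_mul_le_sum_absSorted_mul {v : Fin n → ℝ} (hv : Antitone v) (hv0 : ∀ i, 0 ≤ v i)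
    (x : Fin n → ℝ) : ∑ i, x i * v i ≤ ∑ i, absSorted x i * v i := by
  set σ := Tuple.sort fun j => -|x j|
  calc ∑ i, x i * v i ≤ ∑ i, |x i| * v i :=
        sum_le_sum fun i _ => mul_le_mul_of_nonneg_right (le_abs_self _) (hv0 i)
    _ = ∑ i, absSorted x i * v (σ i) :=
        (Equiv.sum_comp σ fun j => |x j| * v j).symm
    _ ≤ ∑ i, absSorted x i * v i :=
        ((absSorted_antitone x).monovary hv).sum_mul_comp_perm_le_sum_mul

end absSorted

section owl

variable {w : Fin n → ℝ}

lemma owl_absSorted (w x : Fin n → ℝ) : owl w (absSorted x) = owl w x := by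
  rw [owl, absSorted_absSorted, owl]

lemma sum_mul_abs_comp_perm_le_owl (hw : Antitone w) (x : Fin n → ℝ)
    (τ : Equiv.Perm (Fin n)) : ∑ i, w i * |x (τ i)| ≤ owl w x := by
  set σ := Tuple.sort fun j => -|x j|
  have hperm : ∀ i, absSorted x ((σ⁻¹ * τ) i) = |x (τ i)| := fun i => by
    simp [absSorted, σ, Equiv.Perm.mul_apply]
  simpa only [hperm, owl] using
    (hw.monovary (absSorted_antitone x)).sum_mul_comp_perm_le_sum_mul (σ := σ⁻¹ * τ)

lemma owl_convexOn (hw : Antitone w) (hw0 : ∀ i, 0 ≤ w i) : ConvexOn ℝ Set.univ (owl w) := by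
  refine ⟨convex_univ, fun x _ y _ a b ha hb hab => ?_⟩
  set τ := Tuple.sort fun j => -|(a • x + b • y) j|
  have hpointwise : ∀ i, w i * |(a • x + b • y) (τ i)| ≤
      a * (w i * |x (τ i)|) + b * (w i * |y (τ i)|) := fun i => by
    have := abs_add_le (a * x (τ i)) (b * y (τ i))
    rw [abs_mul, abs_mul, abs_of_nonneg ha, abs_of_nonneg hb] at this
    calc w i * |(a • x + b • y) (τ i)| ≤ w i * (a * |x (τ i)| + b * |y (τ i)|) :=
          mul_le_mul_of_nonneg_left (by simpa using this) (hw0 i)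
      _ = _ := by ring
  calc owl w (a • x + b • y) = ∑ i, w i * |(a • x + b • y) (τ i)| := rfl
    _ ≤ a * ∑ i, w i * |x (τ i)| + b * ∑ i, w i * |y (τ i)| := by
        simpa only [mul_sum, ← sum_add_distrib] using sum_le_sum fun i _ => hpointwise i
    _ ≤ a • owl w x + b • owl w y := by
        simp only [smul_eq_mul]
        gcongr
        exacts [sum_mul_abs_comp_perm_le_owl hw x τ, sum_mul_abs_comp_perm_le_owl hw y τ]

end owl

section proxObj

variable {w v : Fin n → ℝ}

lemma proxObj_absSorted_le (hv : Antitone v) (hv0 : ∀ i, 0 ≤ v i) (x : Fin n → ℝ) :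
    proxObj w v (absSorted x) ≤ proxObj w v x := by
  have hexpand : ∀ y : Fin n → ℝ,
      ∑ i, (y i - v i) ^ 2 = ∑ i, y i ^ 2 - 2 * ∑ i, y i * v i + ∑ i, v i ^ 2 := fun y => by
    simp only [sub_sq, sum_add_distrib, sum_sub_distrib, mul_sum, mul_assoc]
  have := sum_mul_le_sum_absSorted_mul hv hv0 x
  simp only [proxObj, owl_absSorted, hexpand, sum_absSorted_sq]
  linarith

lemma proxObj_midpoint_le (hw : Antitone w) (hw0 : ∀ i, 0 ≤ w i) (x y : Fin n → ℝ) :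
    proxObj w v ((1 / 2 : ℝ) • x + (1 / 2 : ℝ) • y) ≤
      (proxObj w v x + proxObj w v y) / 2 - (∑ i, (x i - y i) ^ 2) / 8 := by
  have howl := (owl_convexOn hw hw0).2 (Set.mem_univ x) (Set.mem_univ y)
    (by norm_num : (0 : ℝ) ≤ 1 / 2) (by norm_num : (0 : ℝ) ≤ 1 / 2) (by norm_num)
  have hsq : ∑ i, (((1 / 2 : ℝ) • x + (1 / 2 : ℝ) • y) i - v i) ^ 2 =
      (∑ i, (x i - v i) ^ 2) / 2 + (∑ i, (y i - v i) ^ 2) / 2 - (∑ i, (x i - y i) ^ 2) / 4 := by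
    simp only [sum_div, ← sum_add_distrib, ← sum_sub_distrib]
    exact sum_congr rfl fun i _ => by simp only [Pi.add_apply, Pi.smul_apply, smul_eq_mul]; ring
  simp only [proxObj, smul_eq_mul] at howl ⊢
  rw [hsq]
  linarith

lemma eq_of_proxObj_le_of_isMin (hw : Antitone w) (hw0 : ∀ i, 0 ≤ w i) {p q : Fin n → ℝ}
    (hp : ∀ x, proxObj w v p ≤ proxObj w v x) (hq : proxObj w v q ≤ proxObj w v p) :
    q = p := by
  have hmid := (hp _).trans (proxObj_midpoint_le (v := v) hw hw0 p q)
  have hdist : ∑ i, (p i - q i) ^ 2 = 0 :=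
    le_antisymm (by linarith) (sum_nonneg fun i _ => sq_nonneg _)
  funext i
  have := (sum_eq_zero_iff_of_nonneg fun j _ => sq_nonneg (p j - q j)).mp hdist i (mem_univ i)
  exact (sub_eq_zero.mp (pow_eq_zero_iff two_ne_zero |>.mp this)).symm

end proxObj

/-- If v lies in the monotone non-negative cone, so does prox_{Omega_w}(v). -/
theorem owl_prox_mem_cone {n : ℕ} (w : Fin n → ℝ) (hmono : Antitone w)
    (hnonneg : ∀ i, 0 ≤ w i) (v p : Fin n → ℝ)
    (hv : Antitone v) (hv0 : ∀ i, 0 ≤ v i)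
    (hp : ∀ x, proxObj w v p ≤ proxObj w v x) :
    Antitone p ∧ ∀ i, 0 ≤ p i := by
  have hsorted : absSorted p = p :=
    eq_of_proxObj_le_of_isMin hmono hnonneg hp (proxObj_absSorted_le hv hv0 p)
  rw [← hsorted]
  exact ⟨absSorted_antitone p, absSorted_nonneg p⟩
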